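/- arXiv:1407.0233 — 11 statements merged into one kernel-verified Lean document; each statement's English description precedes it below -/
import Mathlib

section
/- Let f : ℝ → ℝ be continuous on the closed interval [0,1]. Then there exists a real number a such that the Lebesgue integral ∫⁻ x in Set.Icc 0 1, (ENNReal.ofReal |f x - a|)⁻¹ with respect to the volume measure equals ∞ (i.e., the integral ∫₀¹ dx / |f(x) − a| diverges). -/
/-!
Push the Lebesgue measure of `[0, 1]` forward along `f` to a finite measure `ν` on `ℝ`; the
integral becomes `∫ dν(y) / |y - a|`. Differentiating Lebesgue measure with respect to `ν`
(Besicovitch) shows that for `ν`-almost every `a` there is `C < ∞` with `r ≤ C ν [a - r, a + r]`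
for small `r > 0`. For such `a`, the measure `ρ` with density `1 / |y - a|` against `ν` gives
mass at least `1 / C` to every small ball around `a`. If `ρ` were finite, these balls would
shrink to `{a}` and force `ρ {a} > 0`, so `ν {a} > 0`; but then the density `1 / 0 = ∞` on the
atom makes `ρ` infinite after all.
-/

open MeasureTheory Set Filter Metric
open scoped ENNReal Topology

theorem measure_closedBall_le_mul_setLIntegral_inv_abs_sub (ν : Measure ℝ) (a : ℝ) {r : ℝ}
    (hr : 0 < r) :
    ν (closedBall a r) ≤ ENNReal.ofReal r * ∫⁻ y in closedBall a r, (ENNReal.ofReal |y - a|)⁻¹ ∂ν :=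
  calc ν (closedBall a r)
      = ENNReal.ofReal r * ∫⁻ _ in closedBall a r, (ENNReal.ofReal r)⁻¹ ∂ν := by
        rw [setLIntegral_const, ← mul_assoc,
          ENNReal.mul_inv_cancel (ENNReal.ofReal_ne_zero_iff.2 hr) ENNReal.ofReal_ne_top, one_mul]
    _ ≤ ENNReal.ofReal r * ∫⁻ y in closedBall a r, (ENNReal.ofReal |y - a|)⁻¹ ∂ν := by
        refine mul_le_mul_right (setLIntegral_mono (by fun_prop) fun y hy ↦ ?_) _
        exact ENNReal.inv_le_inv.2 (ENNReal.ofReal_le_ofReal (mem_closedBall.1 hy))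

theorem lintegral_inv_abs_sub_eq_top {ν : Measure ℝ} {a : ℝ} {C : ℝ≥0∞} (hC : C ≠ ∞)
    (hν : ∀ᶠ r in 𝓝[>] 0, ENNReal.ofReal r ≤ C * ν (closedBall a r)) :
    ∫⁻ y, (ENNReal.ofReal |y - a|)⁻¹ ∂ν = ∞ := by
  set g : ℝ → ℝ≥0∞ := fun y ↦ (ENNReal.ofReal |y - a|)⁻¹
  have hball : ∀ᶠ r in 𝓝[>] 0, C⁻¹ ≤ ν.withDensity g (closedBall a r) := by
    filter_upwards [hν, self_mem_nhdsWithin] with r hr (hr0 : 0 < r)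
    rw [withDensity_apply _ measurableSet_closedBall, ← one_div]
    refine ENNReal.div_le_of_le_mul ((ENNReal.mul_le_mul_iff_right
      (ENNReal.ofReal_ne_zero_iff.2 hr0) ENNReal.ofReal_ne_top).1 ?_)
    calc ENNReal.ofReal r * 1 ≤ C * ν (closedBall a r) := by rwa [mul_one]
      _ ≤ C * (ENNReal.ofReal r * ∫⁻ y in closedBall a r, g y ∂ν) :=
        mul_le_mul_right (measure_closedBall_le_mul_setLIntegral_inv_abs_sub ν a hr0) C
      _ = ENNReal.ofReal r * ((∫⁻ y in closedBall a r, g y ∂ν) * C) := by ring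
  by_contra hfin
  have : IsFiniteMeasure (ν.withDensity g) := isFiniteMeasure_withDensity hfin
  have hlim : Tendsto (fun r ↦ ν.withDensity g (closedBall a r)) (𝓝[>] 0)
      (𝓝 (ν.withDensity g {a})) := by
    have := tendsto_measure_biInter_gt (μ := ν.withDensity g) (s := closedBall a) (a := 0)
      (fun _ _ ↦ measurableSet_closedBall.nullMeasurableSet)
      (fun _ _ _ hij ↦ closedBall_subset_closedBall hij) ⟨1, one_pos, measure_ne_top _ _⟩
    rwa [biInter_gt_closedBall, closedBall_zero] at this
  have hatom : C⁻¹ ≤ ν.withDensity g {a} := ge_of_tendsto hlim hball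
  rw [withDensity_apply _ (measurableSet_singleton a), lintegral_singleton] at hatom
  have hνa : ν {a} ≠ 0 := by
    rintro h
    simp [h, hC] at hatom
  refine hfin (top_unique ?_)
  calc ∞ = g a * ν {a} := by simp [g, hνa]
    _ = ∫⁻ y in {a}, g y ∂ν := (lintegral_singleton g a).symm
    _ ≤ ∫⁻ y, g y ∂ν := setLIntegral_le_lintegral _ _

theorem ae_ofReal_le_mul_measure_closedBall (ν : Measure ℝ) [IsLocallyFiniteMeasure ν] :
    ∀ᵐ a ∂ν, ∃ C ≠ ∞, ∀ᶠ r in 𝓝[>] 0, ENNReal.ofReal r ≤ C * ν (closedBall a r) := by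
  filter_upwards [Besicovitch.ae_tendsto_rnDeriv volume ν, volume.rnDeriv_lt_top ν]
    with a hlim hfin
  refine ⟨volume.rnDeriv ν a + 1, by finiteness, ?_⟩
  filter_upwards [hlim.eventually (gt_mem_nhds (ENNReal.lt_add_right hfin.ne one_ne_zero)),
    self_mem_nhdsWithin] with r hr (hr0 : 0 < r)
  rw [Real.volume_closedBall,
    ENNReal.div_lt_iff (Or.inr (by simpa)) (Or.inr ENNReal.ofReal_ne_top)] at hr
  calc ENNReal.ofReal r ≤ ENNReal.ofReal (2 * r) := ENNReal.ofReal_le_ofReal (by linarith)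
    _ ≤ _ := hr.le

theorem ae_lintegral_inv_abs_sub_eq_top (ν : Measure ℝ) [IsLocallyFiniteMeasure ν] :
    ∀ᵐ a ∂ν, ∫⁻ y, (ENNReal.ofReal |y - a|)⁻¹ ∂ν = ∞ := by
  filter_upwards [ae_ofReal_le_mul_measure_closedBall ν] with a ⟨C, hC, hball⟩
  exact lintegral_inv_abs_sub_eq_top hC hball

theorem divergent_integral_exists (f : ℝ → ℝ) (hf : ContinuousOn f (Set.Icc 0 1)) :
    ∃ a : ℝ, ∫⁻ x in Set.Icc (0:ℝ) 1, (ENNReal.ofReal |f x - a|)⁻¹ = ⊤ := by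
  have hfm : AEMeasurable f (volume.restrict (Icc 0 1)) := hf.aemeasurable measurableSet_Icc
  set ν := (volume.restrict (Icc (0:ℝ) 1)).map f
  have : (ae ν).NeBot := ae_neBot.2 (by simp [ν, Measure.map_eq_zero_iff hfm])
  obtain ⟨a, ha⟩ := (ae_lintegral_inv_abs_sub_eq_top ν).exists
  exact ⟨a, by rwa [lintegral_map' (by fun_prop) hfm] at ha⟩
end

section
/- Let g : ℝ → ℝ be antitone (nonincreasing) on the closed interval [0,1]. Then there exists a real number a such that the Lebesgue integral ∫⁻ x in Set.Icc 0 1, (ENNReal.ofReal |g x - a|)⁻¹ with respect to the volume measure equals ∞ (i.e., the integral ∫₀¹ dx / |g(x) − a| diverges). -/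
/-!
A monotone function is differentiable almost everywhere, so `g` is differentiable at some
`c ∈ (0, 1)`. Near `c` this gives `|g x - g c| ≤ K |x - c|`, hence with `a = g c` the integrand
dominates `K⁻¹ / |x - c|`, which is not integrable on any neighbourhood of `c`.
-/

open MeasureTheory Set Filter Topology Asymptotics
open scoped ENNReal

theorem lintegral_Ioo_inv_ofReal_abs_sub_eq_top {a b c : ℝ} (hc : c ∈ Ioo a b) :
    ∫⁻ x in Ioo a b, (ENNReal.ofReal |x - c|)⁻¹ = ∞ := by
  have hab : a ≤ b := (hc.1.trans hc.2).le
  have hnot : ¬IntegrableOn (fun x => (x - c)⁻¹) (Ioo a b) := by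
    rw [← integrableOn_Ioc_iff_integrableOn_Ioo,
      ← intervalIntegrable_iff_integrableOn_Ioc_of_le hab,
      intervalIntegrable_sub_inv_iff, uIcc_of_le hab]
    exact fun h => h.elim (hc.1.trans hc.2).ne (· (Ioo_subset_Icc_self hc))
  have hmeas : AEStronglyMeasurable (fun x : ℝ => (x - c)⁻¹) (volume.restrict (Ioo a b)) := by
    fun_prop
  have hinfinite : ∫⁻ x in Ioo a b, ‖(x - c)⁻¹‖ₑ = ∞ :=
    not_lt_top_iff.1 fun h => hnot ⟨hmeas, hasFiniteIntegral_iff_enorm.2 h⟩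
  refine top_unique (hinfinite.ge.trans (lintegral_mono fun x => ?_))
  -- at `x = c` the left side is the junk value `‖(0 : ℝ)⁻¹‖ₑ = 0`
  rw [Real.enorm_eq_ofReal_abs, abs_inv]
  exact ENNReal.ofReal_inv_le

theorem setLIntegral_inv_ofReal_abs_sub_eq_top_of_isBigO {f : ℝ → ℝ} {c : ℝ} {s : Set ℝ}
    (hf : (f · - f c) =O[𝓝 c] (· - c)) (hs : s ∈ 𝓝 c) :
    ∫⁻ x in s, (ENNReal.ofReal |f x - f c|)⁻¹ = ∞ := by
  obtain ⟨K, hK, hKf⟩ := hf.exists_pos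
  obtain ⟨l, u, hc, hsub⟩ := mem_nhds_iff_exists_Ioo_subset.1 (inter_mem hs hKf.bound)
  have hbound : ∀ x ∈ Ioo l u,
      (ENNReal.ofReal K)⁻¹ * (ENNReal.ofReal |x - c|)⁻¹ ≤ (ENNReal.ofReal |f x - f c|)⁻¹ := by
    intro x hx
    rw [← ENNReal.mul_inv (by simp [hK]) (by simp), ← ENNReal.ofReal_mul hK.le]
    exact ENNReal.inv_le_inv.2 (ENNReal.ofReal_le_ofReal (hsub hx).2)
  refine top_unique ?_
  calc ∞ = (ENNReal.ofReal K)⁻¹ * ∫⁻ x in Ioo l u, (ENNReal.ofReal |x - c|)⁻¹ := by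
        rw [lintegral_Ioo_inv_ofReal_abs_sub_eq_top hc, ENNReal.mul_top (by simp)]
    _ = ∫⁻ x in Ioo l u, (ENNReal.ofReal K)⁻¹ * (ENNReal.ofReal |x - c|)⁻¹ :=
        (lintegral_const_mul' _ _ (by simp [hK])).symm
    _ ≤ ∫⁻ x in Ioo l u, (ENNReal.ofReal |f x - f c|)⁻¹ :=
        setLIntegral_mono' measurableSet_Ioo hbound
    _ ≤ ∫⁻ x in s, (ENNReal.ofReal |f x - f c|)⁻¹ :=
        lintegral_mono_set fun x hx => (hsub hx).1

theorem MonotoneOn.exists_mem_interior_differentiableAt {f : ℝ → ℝ} {s : Set ℝ}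
    (hf : MonotoneOn f s) (hs : volume (interior s) ≠ 0) :
    ∃ c ∈ interior s, DifferentiableAt ℝ f c := by
  have hae : ∀ᵐ x ∂volume.restrict (interior s), DifferentiableAt ℝ f x := by
    rw [ae_restrict_iff' measurableSet_interior]
    filter_upwards [hf.ae_differentiableWithinAt_of_mem] with x hx hxs
    exact (hx (interior_subset hxs)).differentiableAt (mem_interior_iff_mem_nhds.1 hxs)
  have : (ae (volume.restrict (interior s))).NeBot := ae_neBot.2 (by simpa using hs)
  obtain ⟨c, hc, hdiff⟩ := (hae.and (ae_restrict_mem measurableSet_interior)).exists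
  exact ⟨c, hdiff, hc⟩

theorem divergent_integral_exists_antitone (g : ℝ → ℝ) (hg : AntitoneOn g (Set.Icc 0 1)) :
    ∃ a : ℝ, ∫⁻ x in Set.Icc (0:ℝ) 1, (ENNReal.ofReal |g x - a|)⁻¹ = ⊤ := by
  obtain ⟨c, hc, hdiff⟩ := hg.neg.exists_mem_interior_differentiableAt (by simp)
  exact ⟨g c, setLIntegral_inv_ofReal_abs_sub_eq_top_of_isBigO
    (differentiableAt_neg_iff.1 hdiff).isBigO_sub (mem_interior_iff_mem_nhds.1 hc)⟩
end

section
/- Let g : ℝ → ℝ and let p be a point of the open interval (0,1) at which g is differentiable. Then the Lebesgue integral ∫⁻ x in Set.Icc 0 1, (ENNReal.ofReal |g x - g p|)⁻¹ with respect to the volume measure equals ∞ (i.e., the integral ∫₀¹ dx / |g(x) − g(p)| diverges, since near p one has |g(x) − g(p)| ≤ (|g′(p)| + 1)·|x − p|). -/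
open MeasureTheory Filter Topology Set Asymptotics
open scoped ENNReal

/-! Differentiability at `p` gives `|g x - g p| ≤ C |x - p|` near `p`, so on a right
neighbourhood of `p` the integrand dominates `C⁻¹ |x - p|⁻¹`, whose integral diverges.
The comparison is made in `ℝ≥0∞`, where `0⁻¹ = ∞`, so zeros of `g x - g p` need no separate care. -/

theorem setLIntegral_Ioo_enorm_sub_inv_eq_top {a b : ℝ} (hab : a < b) :
    ∫⁻ x in Ioo a b, ‖x - a‖ₑ⁻¹ = ∞ := by
  by_contra hfin
  have hint : IntegrableOn (fun x => (x - a)⁻¹) (Ioo a b) := by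
    refine (integrable_toReal_of_lintegral_ne_top (by fun_prop) hfin).congr ?_
    filter_upwards [ae_restrict_mem measurableSet_Ioo] with x hx
    rw [ENNReal.toReal_inv, toReal_enorm, Real.norm_of_nonneg (sub_nonneg.mpr hx.1.le)]
  have := (intervalIntegrable_iff_integrableOn_Ioo_of_le hab.le).mpr hint
  simp [intervalIntegrable_sub_inv_iff, hab.ne] at this

theorem setLIntegral_enorm_inv_eq_top_of_isBigO {E : Type*} [NormedAddCommGroup E]
    {f : ℝ → E} {c : ℝ} {s : Set ℝ} (hf : f =O[𝓝[>] c] (· - c)) (hs : s ∈ 𝓝[>] c) :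
    ∫⁻ x in s, ‖f x‖ₑ⁻¹ = ∞ := by
  obtain ⟨C, hC, hfC⟩ := hf.exists_pos
  obtain ⟨b, hcb, hsub⟩ := mem_nhdsGT_iff_exists_Ioo_subset.mp (inter_mem hs hfC.bound)
  have hle : ∀ x ∈ Ioo c b, (ENNReal.ofReal C)⁻¹ * ‖x - c‖ₑ⁻¹ ≤ ‖f x‖ₑ⁻¹ := fun x hx => by
    rw [← ENNReal.mul_inv (by simp) (by simp), ENNReal.inv_le_inv, ← ofReal_norm,
      ← ofReal_norm, ← ENNReal.ofReal_mul hC.le]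
    exact ENNReal.ofReal_le_ofReal (hsub hx).2
  refine top_le_iff.mp ?_
  calc ∞ = (ENNReal.ofReal C)⁻¹ * ∫⁻ x in Ioo c b, ‖x - c‖ₑ⁻¹ := by
        rw [setLIntegral_Ioo_enorm_sub_inv_eq_top hcb, ENNReal.mul_top (by simp)]
    _ = ∫⁻ x in Ioo c b, (ENNReal.ofReal C)⁻¹ * ‖x - c‖ₑ⁻¹ :=
        (lintegral_const_mul' _ _ (by simpa using hC)).symm
    _ ≤ ∫⁻ x in Ioo c b, ‖f x‖ₑ⁻¹ := setLIntegral_mono' measurableSet_Ioo hle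
    _ ≤ ∫⁻ x in s, ‖f x‖ₑ⁻¹ := lintegral_mono_set fun x hx => (hsub hx).1

theorem divergent_integral_at_differentiability_point (g : ℝ → ℝ) (p : ℝ)
    (hp : p ∈ Set.Ioo (0:ℝ) 1) (hg : DifferentiableAt ℝ g p) :
    ∫⁻ x in Set.Icc (0:ℝ) 1, (ENNReal.ofReal |g x - g p|)⁻¹ = ⊤ := by
  simp_rw [← Real.enorm_eq_ofReal_abs]
  exact setLIntegral_enorm_inv_eq_top_of_isBigO (hg.isBigO_sub.mono nhdsWithin_le_nhds)
    (mem_nhdsWithin_of_mem_nhds (Icc_mem_nhds hp.1 hp.2))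
end

section
/- Let f : ℝ → ℝ be continuous on the closed interval [0,1]. Then there exists a function g : ℝ → ℝ that is continuous on [0,1], antitone (nonincreasing) on [0,1], and equimeasurable with f on [0,1] (a decreasing rearrangement of f). -/
/-!
The rearrangement is the generalized inverse `g x = inf {y ≥ m | d y ≤ x}` of the distribution
function `d y = |{x ∈ [0,1] | y < f x}|`, where `f '' [0,1] = [m, M]`. Since `d` is antitone and
right-continuous, `{x ∈ [0,1] | y < g x} = [0, d y)` for `y ≥ m`, which is equimeasurability.
Continuity of `f` on the connected set `[0,1]` makes `d` strictly decreasing on `[m, M]`: every band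
`{y₁ < f < y₂}` contains a nonempty relatively open subset of `[0,1]`. Hence `g` maps `[0,1]` onto
`[m, M]`, and an antitone map of an interval onto an interval is continuous.
-/

open MeasureTheory Set
open scoped ENNReal Topology

theorem AntitoneOn.continuousOn_of_ordConnected_image {α β : Type*} [LinearOrder α]
    [TopologicalSpace α] [OrderTopology α] [LinearOrder β] [TopologicalSpace β] [OrderTopology β]
    [DenselyOrdered β] {g : α → β} {s : Set α} [s.OrdConnected] (hg : AntitoneOn g s)
    (himg : (g '' s).OrdConnected) : ContinuousOn g s := by
  let h : s → (g '' s)ᵒᵈ := fun x => OrderDual.toDual ⟨g x, mem_image_of_mem g x.2⟩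
  have h_mono : Monotone h := fun a b hab => hg a.2 b.2 hab
  have h_surj : Function.Surjective h := by
    rintro ⟨_, x, hx, rfl⟩
    exact ⟨⟨x, hx⟩, rfl⟩
  rw [continuousOn_iff_continuous_domRestrict]
  exact continuous_subtype_val.comp (continuous_ofDual.comp (h_mono.continuous_of_surjective h_surj))

theorem MeasureTheory.Measure.isEverywherePos_closure {α : Type*} [TopologicalSpace α]
    [MeasurableSpace α] (μ : Measure α) [μ.IsOpenPosMeasure] {U : Set α} (hU : IsOpen U) :
    μ.IsEverywherePos (closure U) := by
  intro x hx n hn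
  obtain ⟨v, hv, hvn⟩ := mem_nhdsWithin_iff_exists_mem_nhds_inter.1 hn
  have hne : (interior v ∩ U).Nonempty :=
    mem_closure_iff.1 hx _ isOpen_interior (mem_interior_iff_mem_nhds.2 hv)
  exact ((isOpen_interior.inter hU).measure_pos μ hne).trans_le
    (measure_mono fun y hy => hvn ⟨interior_subset hy.1, subset_closure hy.2⟩)

theorem MeasureTheory.Measure.IsEverywherePos.restrict_preimage_pos {α β : Type*}
    [TopologicalSpace α] [MeasurableSpace α] [TopologicalSpace β] {μ : Measure α} {s : Set α}
    {f : α → β} {t : Set β} {x : α} (hs : μ.IsEverywherePos s) (hsm : MeasurableSet s)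
    (hf : ContinuousOn f s) (hx : x ∈ s) (ht : t ∈ 𝓝 (f x)) :
    0 < μ.restrict s (f ⁻¹' t) := by
  rw [Measure.restrict_apply' hsm]
  exact hs x hx _ (Filter.inter_mem ((hf x hx).preimage_mem_nhdsWithin ht) self_mem_nhdsWithin)

namespace MeasureTheory

variable {α : Type*} [MeasurableSpace α] {μ : Measure α} {f : α → ℝ} {y y₁ y₂ c : ℝ}

theorem exists_lt_measure_setOf_lt {r : ℝ≥0∞} (h : r < μ {x | y < f x}) :
    ∃ z > y, r < μ {x | z < f x} := by
  have hunion : {x | y < f x} = ⋃ n : ℕ, {x | y + 1 / (n + 1) < f x} := by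
    ext x
    simp only [mem_ofPred_eq, mem_iUnion]
    refine ⟨fun hx => ?_, fun ⟨n, hn⟩ => lt_of_le_of_lt ?_ hn⟩
    · obtain ⟨n, hn⟩ := exists_nat_one_div_lt (sub_pos.2 hx)
      exact ⟨n, by linarith⟩
    · exact le_add_of_nonneg_right Nat.one_div_pos_of_nat.le
  have hmono : Monotone fun n : ℕ => {x | y + 1 / (n + 1) < f x} :=
    fun n k hnk x (hx : y + 1 / ((n : ℝ) + 1) < f x) => lt_of_le_of_lt (by gcongr) hx
  rw [hunion, hmono.measure_iUnion, lt_iSup_iff] at h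
  obtain ⟨n, hn⟩ := h
  exact ⟨_, lt_add_of_pos_right y Nat.one_div_pos_of_nat, hn⟩

noncomputable def distributionFun (μ : Measure α) (f : α → ℝ) (y : ℝ) : ℝ :=
  μ.real {x | y < f x}

theorem distributionFun_le_measureReal_univ [IsFiniteMeasure μ] :
    distributionFun μ f y ≤ μ.real univ :=
  measureReal_mono (subset_univ _)

theorem antitone_distributionFun [IsFiniteMeasure μ] : Antitone (distributionFun μ f) :=
  fun _ _ h => measureReal_mono fun _ hx => lt_of_le_of_lt h hx

theorem distributionFun_eq_zero_of_ae_le (h : ∀ᵐ x ∂μ, f x ≤ y) : distributionFun μ f y = 0 := by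
  rw [ae_iff] at h
  simp only [not_le] at h
  rw [distributionFun, measureReal_def, h, ENNReal.toReal_zero]

theorem exists_lt_distributionFun [IsFiniteMeasure μ] (h : c < distributionFun μ f y) :
    ∃ z > y, c < distributionFun μ f z := by
  rcases lt_or_ge c 0 with hc | hc
  · exact ⟨y + 1, by linarith, hc.trans_le measureReal_nonneg⟩
  · simp only [distributionFun, measureReal_def,
      ← ENNReal.ofReal_lt_iff_lt_toReal hc (measure_ne_top _ _)] at h ⊢
    exact exists_lt_measure_setOf_lt h

theorem distributionFun_lt_of_measure_preimage_Ioo_pos [IsFiniteMeasure μ] (hf : AEMeasurable f μ)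
    (hpos : 0 < μ (f ⁻¹' Ioo y₁ y₂)) : distributionFun μ f y₂ < distributionFun μ f y₁ := by
  obtain ⟨x, hx₁, hx₂⟩ := nonempty_of_measure_ne_zero hpos.ne'
  have hdisj : Disjoint {x | y₂ < f x} (f ⁻¹' Ioo y₁ y₂) :=
    disjoint_left.2 fun x h₂ h => h.2.not_gt h₂
  refine (ENNReal.toReal_lt_toReal (measure_ne_top _ _) (measure_ne_top _ _)).2 ?_
  calc μ {x | y₂ < f x} < μ {x | y₂ < f x} + μ (f ⁻¹' Ioo y₁ y₂) :=
        ENNReal.lt_add_right (measure_ne_top _ _) hpos.ne'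
    _ = μ ({x | y₂ < f x} ∪ f ⁻¹' Ioo y₁ y₂) :=
        (measure_union₀ (hf.nullMeasurable measurableSet_Ioo) hdisj.aedisjoint).symm
    _ ≤ μ {x | y₁ < f x} := measure_mono <| union_subset
        (fun x h => (hx₁.trans hx₂).trans h) fun x h => h.1

theorem strictAntiOn_distributionFun_restrict [TopologicalSpace α] [OpensMeasurableSpace α]
    {s : Set α} [IsFiniteMeasure (μ.restrict s)] (hs : μ.IsEverywherePos s) (hsm : MeasurableSet s)
    (hs_conn : IsPreconnected s) (hf : ContinuousOn f s) :
    StrictAntiOn (distributionFun (μ.restrict s) f) (f '' s) := by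
  intro y₁ hy₁ y₂ hy₂ h
  have hmid : (y₁ + y₂) / 2 ∈ Ioo y₁ y₂ := ⟨left_lt_add_div_two.2 h, add_div_two_lt_right.2 h⟩
  obtain ⟨x, hx, hfx⟩ := (hs_conn.image f hf).ordConnected.out hy₁ hy₂ (Ioo_subset_Icc_self hmid)
  refine distributionFun_lt_of_measure_preimage_Ioo_pos (hf.aemeasurable hsm)
    (hs.restrict_preimage_pos hsm hf hx (isOpen_Ioo.mem_nhds ?_))
  rwa [hfx]

end MeasureTheory

section GeneralizedInverse

variable {d : ℝ → ℝ} {m M x y v : ℝ}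

-- The floor `m` keeps the set bounded below, so that `sInf` does not return the junk value `0`.
noncomputable def generalizedInverse (d : ℝ → ℝ) (m x : ℝ) : ℝ :=
  sInf {y | m ≤ y ∧ d y ≤ x}

theorem le_generalizedInverse (hM : m ≤ M) (hdM : d M ≤ x) : m ≤ generalizedInverse d m x :=
  le_csInf ⟨M, hM, hdM⟩ fun _ hy => hy.1

theorem generalizedInverse_le (hy : m ≤ y) (hdy : d y ≤ x) : generalizedInverse d m x ≤ y :=
  csInf_le ⟨m, fun _ hy => hy.1⟩ ⟨hy, hdy⟩

theorem antitoneOn_generalizedInverse (hM : m ≤ M) :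
    AntitoneOn (generalizedInverse d m) (Ici (d M)) := fun _ hx₁ _ _ h =>
  csInf_le_csInf ⟨m, fun _ hy => hy.1⟩ ⟨M, hM, hx₁⟩ fun _ hy => ⟨hy.1, hy.2.trans h⟩

theorem lt_generalizedInverse_iff (hd : Antitone d) (hright : ∀ y, ∀ c < d y, ∃ z > y, c < d z)
    (hM : m ≤ M) (hdM : d M ≤ x) (hy : m ≤ y) : y < generalizedInverse d m x ↔ x < d y := by
  refine ⟨fun h => lt_of_not_ge fun hdy => (generalizedInverse_le hy hdy).not_gt h, fun h => ?_⟩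
  obtain ⟨z, hyz, hz⟩ := hright y x h
  refine hyz.trans_le (le_csInf ⟨M, hM, hdM⟩ fun w hw => le_of_not_gt fun hwz => ?_)
  exact (hw.2.trans_lt hz).not_ge (hd hwz.le)

theorem generalizedInverse_apply_self (hd : StrictAntiOn d (Icc m M)) (hv : v ∈ Icc m M) :
    generalizedInverse d m (d v) = v := by
  refine le_antisymm (generalizedInverse_le hv.1 le_rfl)
    (le_csInf ⟨v, hv.1, le_rfl⟩ fun w hw => le_of_not_gt fun hwv => ?_)
  exact (hd ⟨hw.1, hwv.le.trans hv.2⟩ hv hwv).not_ge hw.2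

theorem image_generalizedInverse (hd : StrictAntiOn d (Icc m M)) (hM : m ≤ M) (hdM : d M = 0)
    (hd_le : ∀ y, d y ≤ 1) :
    generalizedInverse d m '' Icc 0 1 = Icc m M := by
  refine subset_antisymm ?_ fun v hv => ⟨d v, ⟨?_, hd_le v⟩, generalizedInverse_apply_self hd hv⟩
  · rintro _ ⟨x, hx, rfl⟩
    exact ⟨le_generalizedInverse hM (hdM.trans_le hx.1),
      generalizedInverse_le hM (hdM.trans_le hx.1)⟩
  · exact hdM ▸ hd.antitoneOn hv ⟨hM, le_rfl⟩ hv.2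

theorem sep_lt_generalizedInverse (hd : Antitone d) (hright : ∀ y, ∀ c < d y, ∃ z > y, c < d z)
    (hM : m ≤ M) (hdM : d M = 0) (hd_le : d y ≤ 1) (hy : m ≤ y) :
    {x ∈ Icc 0 1 | y < generalizedInverse d m x} = Ico 0 (d y) := by
  ext x
  constructor
  · rintro ⟨hx, h⟩
    exact ⟨hx.1, (lt_generalizedInverse_iff hd hright hM (hdM.trans_le hx.1) hy).1 h⟩
  · rintro ⟨hx, h⟩
    exact ⟨⟨hx, (h.trans_le hd_le).le⟩,
      (lt_generalizedInverse_iff hd hright hM (hdM.trans_le hx) hy).2 h⟩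

end GeneralizedInverse

theorem exists_decreasing_rearrangement (f : ℝ → ℝ) (hf : ContinuousOn f (Set.Icc 0 1)) :
    ∃ g : ℝ → ℝ, ContinuousOn g (Set.Icc 0 1) ∧ AntitoneOn g (Set.Icc 0 1) ∧
      ∀ y : ℝ, volume {x ∈ Set.Icc (0:ℝ) 1 | f x > y} = volume {x ∈ Set.Icc (0:ℝ) 1 | g x > y} := by
  set d := distributionFun (volume.restrict (Icc (0 : ℝ) 1)) f
  obtain ⟨m, M, hmM, hfI⟩ : ∃ m M, m ≤ M ∧ f '' Icc 0 1 = Icc m M := by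
    refine ⟨_, _, ?_, hf.image_Icc zero_le_one⟩
    exact nonempty_Icc.1 (hf.image_Icc zero_le_one ▸ (nonempty_Icc.2 zero_le_one).image f)
  have hf_mem : ∀ x ∈ Icc (0 : ℝ) 1, f x ∈ Icc m M := fun x hx => hfI ▸ mem_image_of_mem f hx
  have hI_pos : volume.IsEverywherePos (Icc (0 : ℝ) 1) :=
    closure_Ioo (zero_ne_one' ℝ) ▸ volume.isEverywherePos_closure isOpen_Ioo
  have hd_anti : StrictAntiOn d (Icc m M) :=
    hfI ▸ strictAntiOn_distributionFun_restrict hI_pos measurableSet_Icc isPreconnected_Icc hf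
  have hdM : d M = 0 := distributionFun_eq_zero_of_ae_le
    (ae_restrict_of_forall_mem measurableSet_Icc fun x hx => (hf_mem x hx).2)
  have hd_le : ∀ y, d y ≤ 1 := fun y => distributionFun_le_measureReal_univ.trans (by simp)
  have hg_anti : AntitoneOn (generalizedInverse d m) (Icc 0 1) :=
    (antitoneOn_generalizedInverse hmM).mono (hdM ▸ Icc_subset_Ici_self)
  refine ⟨generalizedInverse d m, hg_anti.continuousOn_of_ordConnected_image ?_, hg_anti,
    fun y => ?_⟩
  · rw [image_generalizedInverse hd_anti hmM hdM hd_le]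
    exact ordConnected_Icc
  simp only [gt_iff_lt]
  rcases lt_or_ge y m with hym | hym
  · rw [sep_eq_self_iff_mem_true.2 fun x hx => hym.trans_le (hf_mem x hx).1,
      sep_eq_self_iff_mem_true.2 fun x hx =>
        hym.trans_le (le_generalizedInverse hmM (hdM.trans_le hx.1))]
  · rw [sep_lt_generalizedInverse antitone_distributionFun (fun _ _ => exists_lt_distributionFun)
      hmM hdM (hd_le y) hym, Real.volume_Ico, sub_zero, distributionFun, measureReal_def,
      ENNReal.ofReal_toReal (measure_ne_top _ _), Measure.restrict_apply' measurableSet_Icc,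
      inter_comm]
    rfl
end

section
/- Let N be a positive natural number, let f : Fin N → ℝ, and let σ be a permutation of Fin N such that the rearranged sequence g = f ∘ σ is antitone (i.e., g j ≤ g i whenever i ≤ j). Then for all indices i < j in Fin N there exist indices m < n in Fin N such that (n : ℕ) − (m : ℕ) ≤ (j : ℕ) − (i : ℕ) and |f m − f n| ≥ g i − g j. -/
/-!
Put `A = σ '' {0, …, i}` and `B = σ '' {j, …, N - 1}`: `f ≥ g i` on `A`, `f ≤ g j` on `B`, and
`#A + #B = N - (j - i) + 1`. A closest pair `a ∈ A`, `b ∈ B` has no point of `A ∪ B` strictly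
between them, so at most `j - i - 1` points lie strictly between them, i.e. `|a - b| ≤ j - i`,
while `f a - f b ≥ g i - g j`.
-/

open Finset

section ClosestPair

variable {α : Type*} [LinearOrder α] [LocallyFiniteOrder α]

theorem Finset.card_uIcc_lt_of_mem_Ioo_min_max {a b c : α} (hc : c ∈ Ioo (min a b) (max a b)) :
    #(uIcc a c) < #(uIcc a b) := by
  refine card_lt_card <| (ssubset_iff_of_subset ?_).mpr ⟨b, right_mem_uIcc, ?_⟩
  · exact uIcc_subset_uIcc left_mem_uIcc (Ioo_subset_Icc_self hc)
  · rw [mem_Ioo, min_lt_iff, lt_max_iff] at hc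
    rw [mem_uIcc']
    rcases hc with ⟨h₁ | h₁, h₂ | h₂⟩ <;> rintro (⟨h₃, h₄⟩ | ⟨h₃, h₄⟩) <;> order

/-- A pair minimising `#(uIcc a b)` over `A ×ˢ B` has no point of `A ∪ B` strictly between. -/
theorem Finset.exists_mem_mem_disjoint_Ioo_min_max {A B : Finset α} (hA : A.Nonempty)
    (hB : B.Nonempty) : ∃ a ∈ A, ∃ b ∈ B, Disjoint (Ioo (min a b) (max a b)) (A ∪ B) := by
  obtain ⟨⟨a, b⟩, hab, hmin⟩ :=
    exists_min_image (A ×ˢ B) (fun p : α × α => #(uIcc p.1 p.2)) (hA.product hB)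
  obtain ⟨ha, hb⟩ := mem_product.mp hab
  refine ⟨a, ha, b, hb, disjoint_left.mpr fun c hc hcAB => ?_⟩
  rcases mem_union.mp hcAB with hcA | hcB
  · have hc' : c ∈ Ioo (min b a) (max b a) := by rwa [min_comm, max_comm]
    have := hmin (c, b) (mem_product.mpr ⟨hcA, hb⟩)
    rw [uIcc_comm c, uIcc_comm a] at this
    exact (card_uIcc_lt_of_mem_Ioo_min_max hc').not_ge this
  · exact (card_uIcc_lt_of_mem_Ioo_min_max hc).not_ge (hmin (a, c) (mem_product.mpr ⟨ha, hcB⟩))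

end ClosestPair

theorem Fin.sub_add_card_add_card_le {N : ℕ} {A B : Finset (Fin N)} (hAB : Disjoint A B)
    {m n : Fin N} (hmn : m < n) (hgap : Disjoint (Ioo m n) (A ∪ B)) :
    (n : ℕ) - m + #A + #B ≤ N + 1 := by
  have hcard := card_le_univ (A ∪ B ∪ Ioo m n)
  rw [card_union_of_disjoint hgap.symm, card_union_of_disjoint hAB, Fin.card_Ioo,
    Fintype.card_fin] at hcard
  have : (m : ℕ) < n := hmn
  omega

theorem rearrangement_combinatorial_general (N : ℕ) (f : Fin N → ℝ)
    (σ : Equiv.Perm (Fin N)) (hg : Antitone (f ∘ σ)) :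
    ∀ i j : Fin N, i < j → ∃ m n : Fin N, m < n ∧
      (n : ℕ) - (m : ℕ) ≤ (j : ℕ) - (i : ℕ) ∧
      |f m - f n| ≥ (f ∘ σ) i - (f ∘ σ) j := by
  intro i j hij
  set A := (Iic i).map σ.toEmbedding
  set B := (Ici j).map σ.toEmbedding
  have hAB : Disjoint A B := (disjoint_map _).mpr <| disjoint_left.mpr fun k hki hkj =>
    (hij.trans_le (mem_Ici.mp hkj)).not_ge (mem_Iic.mp hki)
  obtain ⟨a, ha, b, hb, hgap⟩ := exists_mem_mem_disjoint_Ioo_min_max (A := A) (B := B)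
    ⟨σ i, mem_map_of_mem _ (mem_Iic.mpr le_rfl)⟩ ⟨σ j, mem_map_of_mem _ (mem_Ici.mpr le_rfl)⟩
  have hab : a ≠ b := fun h => disjoint_left.mp hAB ha (h ▸ hb)
  have hfa : (f ∘ σ) i ≤ f a := by
    obtain ⟨k, hk, rfl⟩ := mem_map.mp ha
    exact hg (mem_Iic.mp hk)
  have hfb : f b ≤ (f ∘ σ) j := by
    obtain ⟨k, hk, rfl⟩ := mem_map.mp hb
    exact hg (mem_Ici.mp hk)
  have hcount := Fin.sub_add_card_add_card_le hAB (min_lt_max.mpr hab) hgap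
  simp only [A, B, card_map, Fin.card_Iic, Fin.card_Ici] at hcount
  refine ⟨min a b, max a b, min_lt_max.mpr hab, by omega, ?_⟩
  have habs : |f (min a b) - f (max a b)| = |f a - f b| := by
    rcases le_total a b with h | h <;> simp [h, abs_sub_comm]
  rw [habs, ge_iff_le]
  exact (sub_le_sub hfa hfb).trans (le_abs_self _)

theorem rearrangement_combinatorial (N : ℕ) (hN : 0 < N) (f : Fin N → ℝ)
    (σ : Equiv.Perm (Fin N)) (hg : Antitone (f ∘ σ)) :
    ∀ i j : Fin N, i < j → ∃ m n : Fin N, m < n ∧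
      (n : ℕ) - (m : ℕ) ≤ (j : ℕ) - (i : ℕ) ∧
      |f m - f n| ≥ (f ∘ σ) i - (f ∘ σ) j :=
  rearrangement_combinatorial_general N f σ hg
end

section
/- Let N be a positive natural number, let f : Fin N → ℝ, and let σ be a permutation of Fin N such that the rearranged sequence g = f ∘ σ is antitone. Let d be a natural number and ε ≥ 0 a real number. If |f m − f n| ≤ ε for all m, n : Fin N with |(m : ℤ) − (n : ℤ)| ≤ d, then |g i − g j| ≤ ε for all i, j : Fin N with |(i : ℤ) − (j : ℤ)| ≤ d. In other words, the decreasing rearrangement of a finite sequence obeys every modulus of uniformity that the original sequence obeys. -/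
/-!
Write `g = f ∘ σ`. The positions `σ '' Iic i`, carrying values `≥ g i`, and `σ '' Ici j`,
carrying values `≤ g j`, number `i + 1` and `N - j`, together more than `N - d` when `j - i ≤ d`.
Two sets of positions in `Fin N` that large contain positions at distance at most `d`: no position
of either set lies strictly between a closest pair, so its distance is at most `N + 1 - #A - #B`.
So some value `≥ g i` sits within distance `d` of some value `≤ g j`, whence `g i - g j ≤ ε`.
-/

open Finset

lemma Fin.exists_mem_mem_abs_sub_le_of_lt_card_add_card {N d : ℕ} {A B : Finset (Fin N)}
    (hA : A.Nonempty) (hB : B.Nonempty) (hcard : N < #A + #B + d) :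
    ∃ a ∈ A, ∃ b ∈ B, |((a : ℕ) : ℤ) - ((b : ℕ) : ℤ)| ≤ d := by
  by_contra! hfar
  obtain ⟨⟨a, b⟩, hab, hclosest⟩ :=
    (A ×ˢ B).exists_min_image (fun p ↦ |((p.1 : ℕ) : ℤ) - ((p.2 : ℕ) : ℤ)|) (hA.product hB)
  obtain ⟨ha, hb⟩ := mem_product.mp hab
  have hAB : Disjoint A B :=
    disjoint_left.mpr fun x hxA hxB ↦ absurd (hfar x hxA x hxB) (by simp)
  have hgap : Disjoint (A ∪ B) (Ioo (min a b) (max a b)) := by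
    refine disjoint_left.mpr fun x hx hxab ↦ ?_
    rw [mem_Ioo, Fin.lt_def, Fin.lt_def, Fin.coe_min, Fin.coe_max] at hxab
    rcases mem_union.mp hx with hxA | hxB
    · have := hclosest (x, b) (mem_product.mpr ⟨hxA, hb⟩)
      simp only [abs_le, le_abs] at this
      omega
    · have := hclosest (a, x) (mem_product.mpr ⟨ha, hxB⟩)
      simp only [abs_le, le_abs] at this
      omega
  have hle := card_le_univ (A ∪ B ∪ Ioo (min a b) (max a b))
  rw [card_union_of_disjoint hgap, card_union_of_disjoint hAB, Fin.card_Ioo, Fintype.card_fin,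
    Fin.coe_min, Fin.coe_max] at hle
  have := hfar a ha b hb
  rw [lt_abs] at this
  omega

lemma Antitone.sub_le_of_forall_abs_sub_le {α : Type*} [AddCommGroup α] [LinearOrder α]
    [IsOrderedAddMonoid α] {N d : ℕ} {f : Fin N → α} {σ : Equiv.Perm (Fin N)} {ε : α}
    (hg : Antitone (f ∘ σ))
    (hf : ∀ m n : Fin N, |((m : ℕ) : ℤ) - ((n : ℕ) : ℤ)| ≤ d → |f m - f n| ≤ ε)
    {i j : Fin N} (hd : ((j : ℕ) : ℤ) - (i : ℕ) ≤ d) :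
    (f ∘ σ) i - (f ∘ σ) j ≤ ε := by
  obtain ⟨a, ha, b, hb, hab⟩ := Fin.exists_mem_mem_abs_sub_le_of_lt_card_add_card
    (A := (Iic i).map σ.toEmbedding) (B := (Ici j).map σ.toEmbedding) (d := d)
    ⟨σ i, mem_map_of_mem _ (mem_Iic.mpr le_rfl)⟩ ⟨σ j, mem_map_of_mem _ (mem_Ici.mpr le_rfl)⟩
    (by rw [card_map, card_map, Fin.card_Iic, Fin.card_Ici]; omega)
  obtain ⟨p, hpi, rfl⟩ := mem_map.mp ha
  obtain ⟨q, hjq, rfl⟩ := mem_map.mp hb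
  calc (f ∘ σ) i - (f ∘ σ) j ≤ f (σ p) - f (σ q) :=
        sub_le_sub (hg (mem_Iic.mp hpi)) (hg (mem_Ici.mp hjq))
    _ ≤ |f (σ p) - f (σ q)| := le_abs_self _
    _ ≤ ε := hf _ _ hab

theorem rearrangement_modulus_of_uniformity_general (N : ℕ) (f : Fin N → ℝ)
    (σ : Equiv.Perm (Fin N)) (hg : Antitone (f ∘ σ)) (d : ℕ) (ε : ℝ)
    (hf : ∀ m n : Fin N, |((m : ℕ) : ℤ) - ((n : ℕ) : ℤ)| ≤ (d : ℤ) → |f m - f n| ≤ ε) :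
    ∀ i j : Fin N, |((i : ℕ) : ℤ) - ((j : ℕ) : ℤ)| ≤ (d : ℤ) →
      |(f ∘ σ) i - (f ∘ σ) j| ≤ ε := by
  intro i j hd
  obtain ⟨hlower, hupper⟩ := abs_le.mp hd
  exact abs_sub_le_iff.mpr
    ⟨hg.sub_le_of_forall_abs_sub_le hf (by linarith), hg.sub_le_of_forall_abs_sub_le hf hupper⟩

theorem rearrangement_modulus_of_uniformity (N : ℕ) (hN : 0 < N) (f : Fin N → ℝ)
    (σ : Equiv.Perm (Fin N)) (hg : Antitone (f ∘ σ)) (d : ℕ) (ε : ℝ) (hε : 0 ≤ ε)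
    (hf : ∀ m n : Fin N, |((m : ℕ) : ℤ) - ((n : ℕ) : ℤ)| ≤ (d : ℤ) → |f m - f n| ≤ ε) :
    ∀ i j : Fin N, |((i : ℕ) : ℤ) - ((j : ℕ) : ℤ)| ≤ (d : ℤ) →
      |(f ∘ σ) i - (f ∘ σ) j| ≤ ε :=
  rearrangement_modulus_of_uniformity_general N f σ hg d ε hf
end

section
/- Let f : ℝ → ℝ, let x, d : ℝ. Then f has derivative d at x (HasDerivAt f d x) if and only if for every nonzero infinitesimal hyperreal ε, the hyperreal difference quotient (f*(x + ε) − f x) / ε is infinitely close to d, i.e., IsSt ((f* (x + ε) − (f x : ℝ*)) / ε) d. In particular, the derivative is the standard part (shadow) of the ratio of infinitesimal increments. -/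
/-! The derivative is the limit of the slope `t ↦ (f (x + t) - f x) / t` along `𝓝[≠] 0`, and the
hyperreal difference quotient at `dx` is the natural extension of that slope evaluated at `dx`.
Limits along a countably generated filter are detected by hyperreal points: if the slope misses
a neighbourhood `U` of `d` frequently, a sequence tending to `0` inside the set where it misses
`U` is a nonzero infinitesimal at which the difference quotient is not infinitely close to `d`. -/

set_option linter.deprecated false

open Hyperreal

noncomputable def naturalExtension (f : ℝ → ℝ) : ℝ* → ℝ* :=
  fun y => Filter.Germ.map f y

open Filter Topology

theorem Filter.tendsto_iff_forall_germ_tendsto {α β : Type*} {k : Filter α}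
    [k.IsCountablyGenerated] {l : Filter β} {g : α → β} :
    Tendsto g k l ↔
      ∀ y : Germ (hyperfilter ℕ : Filter ℕ) α, y.Tendsto k → (y.map g).Tendsto l := by
  refine ⟨fun hg y hy ↦ ?_, fun H ↦ ?_⟩
  · induction y using Germ.inductionOn with
    | h u => exact hg.comp hy
  by_contra hg
  obtain ⟨U, hU, hgU⟩ := not_tendsto_iff_exists_frequently_notMem.1 hg
  have : (k ⊓ 𝓟 {z | g z ∉ U}).NeBot := frequently_iff_neBot.1 hgU
  obtain ⟨u, hu⟩ := exists_seq_tendsto (k ⊓ 𝓟 {z | g z ∉ U})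
  obtain ⟨hu_k, hu_out⟩ := tendsto_inf.1 (hu.mono_left Nat.hyperfilter_le_atTop)
  have hu_in : ∀ᶠ n in (hyperfilter ℕ : Filter ℕ), g (u n) ∈ U := H u hu_k.germ_tendsto hU
  obtain ⟨n, hn_in, hn_out⟩ := (hu_in.and (tendsto_principal.1 hu_out)).exists
  exact hn_out hn_in

theorem Hyperreal.ofSeq_ne_coe_iff {u : ℕ → ℝ} {r : ℝ} :
    ofSeq u ≠ r ↔ ∀ᶠ n in (hyperfilter ℕ : Filter ℕ), u n ≠ r :=
  (not_congr Germ.coe_eq).trans Ultrafilter.eventually_not.symm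

theorem Hyperreal.tendsto_nhdsNE_iff {y : ℝ*} {r : ℝ} :
    y.Tendsto (𝓝[≠] r) ↔ IsSt y r ∧ y ≠ r := by
  obtain ⟨u, rfl⟩ := ofSeq_surjective y
  rw [isSt_iff_tendsto, ofSeq_ne_coe_iff]
  exact tendsto_nhdsWithin_iff

theorem naturalExtension_sub_div (f : ℝ → ℝ) (x : ℝ) (h : ℝ*) :
    (naturalExtension f ((x : ℝ*) + h) - (f x : ℝ*)) / h =
      h.map fun t ↦ (f (x + t) - f x) / t := by
  obtain ⟨u, rfl⟩ := ofSeq_surjective h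
  rfl

theorem hasDerivAt_iff_isSt_difference_quotient (f : ℝ → ℝ) (x d : ℝ) :
    HasDerivAt f d x ↔
      ∀ dx : ℝ*, Infinitesimal dx → dx ≠ 0 →
        IsSt ((naturalExtension f ((x : ℝ*) + dx) - (f x : ℝ*)) / dx) d := by
  rw [hasDerivAt_iff_tendsto_slope_zero]
  simp only [smul_eq_mul, ← div_eq_inv_mul]
  rw [tendsto_iff_forall_germ_tendsto]
  refine forall_congr' fun dx : ℝ* ↦ ?_
  rw [naturalExtension_sub_div, Infinitesimal, ← and_imp, ← coe_zero, ← tendsto_nhdsNE_iff]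
  exact imp_congr_right fun _ ↦ isSt_iff_tendsto.symm
end

section
/- Let f : ℝ → ℝ and x : ℝ. Then f is continuous at x if and only if the natural extension f* maps the halo of x into the halo of f(x); that is, ContinuousAt f x holds if and only if for every hyperreal y with IsSt y x one has IsSt (f* y) (f x). -/
/-! A hyperreal is the germ of a sequence along the hyperfilter, and it lies in the halo of `x`
exactly when that sequence tends to `x` along the hyperfilter. Continuity at `x` is sequential, and
a sequence tending to `x` whose images all avoid a neighbourhood of `f x` has images converging to
`f x` along no proper filter, in particular not along the hyperfilter. -/

open Hyperreal

open Filter Topology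

theorem tendsto_of_seq_tendsto_along {X Y : Type*} {f : X → Y} {la : Filter X} {lb : Filter Y}
    [la.IsCountablyGenerated] (l : Filter ℕ) [l.NeBot]
    (h : ∀ u : ℕ → X, Tendsto u atTop la → Tendsto (f ∘ u) l lb) : Tendsto f la lb := by
  by_contra hf
  obtain ⟨s, hs, hfreq⟩ := not_tendsto_iff_exists_frequently_notMem.1 hf
  obtain ⟨u, hu, hus⟩ := frequently_iff_seq_forall.1 hfreq
  obtain ⟨n, hn⟩ := ((h u hu).eventually_mem hs).exists
  exact hus n hn

theorem continuousAt_iff_forall_germ_tendsto (f : ℝ → ℝ) (x : ℝ) :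
    ContinuousAt f x ↔ ∀ y : ℝ*, y.Tendsto (𝓝 x) → (y.map f).Tendsto (𝓝 (f x)) := by
  refine ⟨fun hf y hy => stdPart_map hf hy, fun h => ?_⟩
  refine tendsto_of_seq_tendsto_along (hyperfilter ℕ) fun u hu => ?_
  exact h (ofSeq u) (hu.mono_left Nat.hyperfilter_le_atTop)

theorem continuousAt_iff_halo (f : ℝ → ℝ) (x : ℝ) :
    ContinuousAt f x ↔ ∀ y : ℝ*, IsSt y x → IsSt (naturalExtension f y) (f x) := by
  simp only [isSt_iff_tendsto]
  exact continuousAt_iff_forall_germ_tendsto f x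
end

section
/- Let U be a free (non-principal) ultrafilter on ℕ. Then the set S = {x ∈ [0,1] | {n : ℕ | the n-th binary digit of x is 1} ∈ U}, where the n-th binary digit of x is ⌊2^(n+1) · x⌋ mod 2, is not Lebesgue measurable (it is not a null-measurable set for the volume measure on ℝ). -/
/-!
Let `T` be the set of reals `x` whose set of indices of binary digits equal to `1` lies in `U`.
For a dyadic rational `c = m / 2 ^ n`, the reflection `x ↦ c - x` flips every binary digit of
index `≥ n` of a non-dyadic `x`, so it changes that index set only up to complementation on a
finite set; as `U` is free, the reflection exchanges `T` and its complement almost everywhere.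
Since the reflection preserves Lebesgue measure and maps each closed dyadic interval centred at
`c / 2` to itself, `S = T ∩ [0, 1]` fills exactly half of every dyadic interval in `[0, 1]`.
In particular `S` is not null, but if it were measurable, the Lebesgue density theorem would
give a point of `S` around which the dyadic intervals are almost entirely in `S`.
-/

open MeasureTheory Filter Metric Set
open scoped Topology ENNReal

/-- For `a = ⊤` the left side is `⊤ / ⊤ = 0`. -/
theorem ENNReal.div_add_self_le_inv_two (a : ℝ≥0∞) : a / (a + a) ≤ 2⁻¹ := by
  rcases eq_or_ne a 0 with rfl | h0
  · simp
  rcases eq_or_ne a ⊤ with rfl | htop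
  · simp
  rw [← two_mul, ENNReal.div_eq_inv_mul, ENNReal.mul_inv (by simp) (by simp), mul_assoc,
    ENNReal.inv_mul_cancel h0 htop, mul_one]

theorem Int.floor_intCast_sub_of_notMem {R : Type*} [Ring R] [LinearOrder R] [FloorRing R]
    [IsOrderedRing R] {t : R} (ht : t ∉ Set.range Int.cast) (m : ℤ) :
    ⌊(m : R) - t⌋ = m - ⌊t⌋ - 1 := by
  rw [sub_eq_neg_add, Int.floor_add_intCast, Int.floor_neg,
    (Int.ceil_eq_floor_add_one_iff_notMem t).2 ht]
  ring

theorem Ultrafilter.le_cofinite_of_forall_finite_notMem {α : Type*} {U : Ultrafilter α}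
    (hU : ∀ s : Set α, s.Finite → s ∉ U) : (U : Filter α) ≤ cofinite :=
  fun _ hs => Ultrafilter.compl_notMem_iff.mp (hU _ hs)

theorem not_nullMeasurableSet_of_measure_inter_eq_measure_diff {α : Type*} [PseudoMetricSpace α]
    [MeasurableSpace α] [SecondCountableTopology α] [BorelSpace α] {μ : Measure α}
    [IsUnifLocDoublingMeasure μ] [IsLocallyFiniteMeasure μ] {s : Set α} (hs : μ s ≠ 0)
    (h : ∀ᵐ x ∂μ, x ∈ s → ∃ (w : ℕ → α) (δ : ℕ → ℝ), Tendsto δ atTop (𝓝[>] 0) ∧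
      (∀ n, x ∈ closedBall (w n) (δ n)) ∧
      ∀ n, μ (s ∩ closedBall (w n) (δ n)) = μ (closedBall (w n) (δ n) \ s)) :
    ¬ NullMeasurableSet s μ := by
  intro hmeas
  have := ae_restrict_neBot.2 hs
  obtain ⟨x, hdensity, hx⟩ := ((IsUnifLocDoublingMeasure.ae_tendsto_measure_inter_div μ s 1).and
    ((ae_restrict_iff'₀ hmeas).2 h)).exists
  obtain ⟨w, δ, hδ, hxw, hhalf⟩ := hx
  have hlim := hdensity w δ hδ (Eventually.of_forall fun n => by simpa using hxw n)
  have hle : ∀ n, μ (s ∩ closedBall (w n) (δ n)) / μ (closedBall (w n) (δ n)) ≤ 2⁻¹ := fun n => by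
    rw [← measure_inter_add_sdiff₀ (closedBall (w n) (δ n)) hmeas, ← hhalf n,
      inter_comm (closedBall _ _) s]
    exact ENNReal.div_add_self_le_inv_two _
  have := le_of_tendsto' hlim hle
  norm_num at this

theorem ae_two_pow_mul_notMem_range_intCast (μ : Measure ℝ) [NullSingletonClass μ] :
    ∀ᵐ x ∂μ, ∀ j : ℕ, (2 : ℝ) ^ j * x ∉ range Int.cast := by
  refine ae_all_iff.2 fun j => measure_eq_zero_iff_ae_notMem.1 ?_
  exact ((countable_range Int.cast).preimage (mul_right_injective₀ (by positivity))).measure_zero μ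

def binaryDigitSet (x : ℝ) : Set ℕ := {n | ⌊2 ^ (n + 1) * x⌋ % 2 = 1}

theorem binaryDigitSet_sub_eventuallyEq_compl {x c : ℝ} {n : ℕ} {m : ℤ} (hc : 2 ^ n * c = m)
    (hx : ∀ j : ℕ, (2 : ℝ) ^ j * x ∉ range Int.cast) :
    binaryDigitSet (c - x) =ᶠ[cofinite] (binaryDigitSet x)ᶜ := by
  rw [Nat.cofinite_eq_atTop]
  refine eventuallyEq_set.2 ?_
  filter_upwards [eventually_ge_atTop n] with j hj
  have hcj : (2 : ℝ) ^ (j + 1) * c = ((2 * (2 ^ (j - n) * m) : ℤ) : ℝ) := by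
    rw [show j + 1 = 1 + (j - n) + n by omega, pow_add, pow_add, mul_assoc, hc]
    push_cast
    ring
  have hfloor : ⌊2 ^ (j + 1) * (c - x)⌋ = 2 * (2 ^ (j - n) * m) - ⌊2 ^ (j + 1) * x⌋ - 1 := by
    rw [mul_sub, hcj, Int.floor_intCast_sub_of_notMem (hx _)]
  show ⌊2 ^ (j + 1) * (c - x)⌋ % 2 = 1 ↔ ¬ ⌊2 ^ (j + 1) * x⌋ % 2 = 1
  rw [hfloor]
  omega

theorem binaryDigitSet_sub_mem_iff {U : Ultrafilter ℕ} (hU : (U : Filter ℕ) ≤ cofinite)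
    {x c : ℝ} {n : ℕ} {m : ℤ} (hc : 2 ^ n * c = m)
    (hx : ∀ j : ℕ, (2 : ℝ) ^ j * x ∉ range Int.cast) :
    binaryDigitSet (c - x) ∈ U ↔ binaryDigitSet x ∉ U :=
  (congr_sets (eventuallyEq_set.1 ((binaryDigitSet_sub_eventuallyEq_compl hc hx).filter_mono
    hU))).trans Ultrafilter.compl_mem_iff_notMem

theorem volume_setOf_binaryDigitSet_mem_inter_closedBall {U : Ultrafilter ℕ}
    (hU : (U : Filter ℕ) ≤ cofinite) {c : ℝ} {n : ℕ} {m : ℤ} (hc : 2 ^ (n + 1) * c = m) (r : ℝ) :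
    volume ({x | binaryDigitSet x ∈ U} ∩ closedBall c r) =
      volume (closedBall c r \ {x | binaryDigitSet x ∈ U}) := by
  set T := {x | binaryDigitSet x ∈ U}
  have hreflect : MeasurePreserving (fun x => 2 * c - x) volume volume :=
    Measure.measurePreserving_sub_left volume _
  have hball : (fun x => 2 * c - x) ⁻¹' closedBall c r = closedBall c r := by
    ext x
    simp only [mem_preimage, mem_closedBall, Real.dist_eq]
    rw [← abs_neg]
    ring_nf
  have hT : (fun x => 2 * c - x) ⁻¹' T =ᵐ[volume] Tᶜ := by
    filter_upwards [ae_two_pow_mul_notMem_range_intCast volume] with x hx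
    exact propext (binaryDigitSet_sub_mem_iff hU (by rw [← hc]; ring) hx)
  calc volume (T ∩ closedBall c r)
      = volume ((fun x => 2 * c - x) ⁻¹' (T ∩ closedBall c r)) :=
        (hreflect.measure_preimage_emb (MeasurableEquiv.subLeft _).measurableEmbedding _).symm
    _ = volume (Tᶜ ∩ closedBall c r) := by
        rw [preimage_inter, hball]
        exact measure_congr (hT.inter EventuallyEq.rfl)
    _ = volume (closedBall c r \ T) := by rw [inter_comm, sdiff_eq]

theorem closedBall_dyadic_eq_Icc (n : ℕ) (k : ℤ) :
    closedBall ((2 * k + 1 : ℝ) / 2 ^ (n + 1)) (2 ^ (n + 1))⁻¹ =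
      Icc ((k : ℝ) / 2 ^ n) ((k + 1) / 2 ^ n) := by
  rw [Real.closedBall_eq_Icc]
  congr 1 <;> field_simp <;> ring

theorem mem_closedBall_dyadic (n : ℕ) (x : ℝ) :
    x ∈ closedBall ((2 * ⌊2 ^ n * x⌋ + 1 : ℝ) / 2 ^ (n + 1)) (2 ^ (n + 1))⁻¹ := by
  rw [closedBall_dyadic_eq_Icc, mem_Icc, div_le_iff₀' (by positivity), le_div_iff₀' (by positivity)]
  exact ⟨Int.floor_le _, (Int.lt_floor_add_one _).le⟩

theorem closedBall_dyadic_subset_Icc (n : ℕ) {x : ℝ} (hx : x ∈ Ico 0 1) :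
    closedBall ((2 * ⌊2 ^ n * x⌋ + 1 : ℝ) / 2 ^ (n + 1)) (2 ^ (n + 1))⁻¹ ⊆ Icc 0 1 := by
  have hfloor_lt : ⌊(2 : ℝ) ^ n * x⌋ < 2 ^ n := by
    rw [Int.floor_lt]
    push_cast
    nlinarith [hx.2, pow_pos (two_pos (α := ℝ)) n]
  rw [closedBall_dyadic_eq_Icc]
  apply Icc_subset_Icc
  · have : (0 : ℝ) ≤ 2 ^ n * x := mul_nonneg (by positivity) hx.1
    exact div_nonneg (by exact_mod_cast Int.floor_nonneg.2 this) (by positivity)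
  · rw [div_le_one (by positivity)]
    exact_mod_cast Int.add_one_le_of_lt hfloor_lt

theorem tendsto_inv_two_pow_succ_nhdsGT_zero :
    Tendsto (fun n : ℕ => ((2 : ℝ) ^ (n + 1))⁻¹) atTop (𝓝[>] 0) := by
  refine tendsto_nhdsWithin_iff.2 ⟨?_, Eventually.of_forall fun n => mem_Ioi.2 (by positivity)⟩
  exact tendsto_inv_atTop_zero.comp
    ((tendsto_pow_atTop_atTop_of_one_lt one_lt_two).comp (tendsto_add_atTop_nat 1))

def binaryUltrafilterSet (U : Ultrafilter ℕ) : Set ℝ := {x ∈ Icc 0 1 | binaryDigitSet x ∈ U}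

theorem volume_binaryUltrafilterSet_inter_closedBall {U : Ultrafilter ℕ}
    (hU : (U : Filter ℕ) ≤ cofinite) {c r : ℝ} {n : ℕ} {m : ℤ} (hc : 2 ^ (n + 1) * c = m)
    (hsub : closedBall c r ⊆ Icc 0 1) :
    volume (binaryUltrafilterSet U ∩ closedBall c r) =
      volume (closedBall c r \ binaryUltrafilterSet U) := by
  have hinter : binaryUltrafilterSet U ∩ closedBall c r =
      {x | binaryDigitSet x ∈ U} ∩ closedBall c r := by
    ext x
    exact ⟨fun h => ⟨h.1.2, h.2⟩, fun h => ⟨⟨hsub h.2, h.1⟩, h.2⟩⟩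
  have hdiff : closedBall c r \ binaryUltrafilterSet U =
      closedBall c r \ {x | binaryDigitSet x ∈ U} := by
    ext x
    exact ⟨fun h => ⟨h.1, fun h' => h.2 ⟨hsub h.1, h'⟩⟩, fun h => ⟨h.1, fun h' => h.2 h'.2⟩⟩
  rw [hinter, hdiff, volume_setOf_binaryDigitSet_mem_inter_closedBall hU hc]

theorem volume_binaryUltrafilterSet_ne_zero {U : Ultrafilter ℕ} (hU : (U : Filter ℕ) ≤ cofinite) :
    volume (binaryUltrafilterSet U) ≠ 0 := by
  intro hnull
  have hunit : closedBall (2⁻¹ : ℝ) 2⁻¹ = Icc 0 1 := by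
    rw [Real.closedBall_eq_Icc]
    norm_num
  have hhalf := volume_binaryUltrafilterSet_inter_closedBall hU (n := 0) (m := 1) (by norm_num)
    hunit.le
  rw [hunit, measure_mono_null inter_subset_left hnull] at hhalf
  have hle := measure_le_inter_add_sdiff volume (Icc (0 : ℝ) 1) (binaryUltrafilterSet U)
  rw [measure_mono_null inter_subset_right hnull, ← hhalf, Real.volume_Icc] at hle
  norm_num at hle

theorem ultrafilter_set_not_measurable (U : Ultrafilter ℕ)
    (hU : ∀ s : Set ℕ, s.Finite → s ∉ U) :
    ¬ NullMeasurableSet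
      {x ∈ Set.Icc (0:ℝ) 1 | {n : ℕ | ⌊2 ^ (n + 1) * x⌋ % 2 = 1} ∈ U}
      (volume : Measure ℝ) := by
  change ¬ NullMeasurableSet (binaryUltrafilterSet U) volume
  have hfree := Ultrafilter.le_cofinite_of_forall_finite_notMem hU
  refine not_nullMeasurableSet_of_measure_inter_eq_measure_diff
    (volume_binaryUltrafilterSet_ne_zero hfree) ?_
  filter_upwards [ae_two_pow_mul_notMem_range_intCast volume] with x hx hxS
  have hxIco : x ∈ Ico 0 1 := ⟨hxS.1.1, hxS.1.2.lt_of_ne fun h => hx 0 ⟨1, by simp [h]⟩⟩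
  refine ⟨_, _, tendsto_inv_two_pow_succ_nhdsGT_zero, fun n => mem_closedBall_dyadic n x,
    fun n => volume_binaryUltrafilterSet_inter_closedBall hfree (n := n)
      (m := 2 * ⌊2 ^ n * x⌋ + 1) ?_ (closedBall_dyadic_subset_Icc n hxIco)⟩
  push_cast
  field_simp
end

section
/- Leibniz's product rule via the transcendental law of homogeneity: let u, v : ℝ → ℝ, let x, u', v' : ℝ, and suppose u has derivative u' at x and v has derivative v' at x. Then for every nonzero infinitesimal hyperreal ε, the hyperreal quotient (u*(x + ε) · v*(x + ε) − u x · v x) / ε is infinitely close to u x · v' + v x · u', i.e., its standard part equals u x · v' + v x · u'. -/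
open Hyperreal

/-!
The increments `du = u*(x + ε) - u x` and `dv = v*(x + ε) - v x` satisfy
`(u x + du)(v x + dv) - u x · v x = u x · dv + (v x + dv) · du`. Dividing by `ε`, the quotients
`du / ε` and `dv / ε` are infinitely close to `u'` and `v'` (the nonstandard characterization of the
derivative, obtained by transfer from the limit of the slope), and `v x + dv` is infinitely close
to `v x`; so the term `dv · du / ε` is discarded, as the transcendental law of homogeneity
prescribes.
-/

set_option linter.deprecated false

open Filter Topology

namespace Hyperreal

theorem ofSeq_add_tendsto_nhdsNE {d : ℕ → ℝ} (hd : Infinitesimal (ofSeq d)) (hd0 : ofSeq d ≠ 0)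
    (x : ℝ) : Tendsto (fun n => x + d n) (hyperfilter ℕ) (𝓝[≠] x) := by
  have hlim : Tendsto (fun n => x + d n) (hyperfilter ℕ) (𝓝 x) := by
    simpa using (isSt_ofSeq_iff_tendsto.mp hd).const_add x
  have hne : ∀ᶠ n in hyperfilter ℕ, d n ≠ 0 :=
    Ultrafilter.eventually_not.mpr fun h => hd0 (Germ.coe_eq.mpr h)
  refine tendsto_nhdsWithin_iff.mpr ⟨hlim, ?_⟩
  filter_upwards [hne] with n hn
  simpa using hn

theorem isSt_naturalExtension_add_of_tendsto {g : ℝ → ℝ} {x L : ℝ}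
    (hg : Tendsto g (𝓝[≠] x) (𝓝 L)) {dx : ℝ*} (hdx : Infinitesimal dx) (hdx0 : dx ≠ 0) :
    IsSt (naturalExtension g (x + dx)) L := by
  obtain ⟨d, rfl⟩ := ofSeq_surjective dx
  exact isSt_ofSeq_iff_tendsto.mpr (hg.comp (ofSeq_add_tendsto_nhdsNE hdx hdx0 x))

theorem naturalExtension_slope (f : ℝ → ℝ) (x : ℝ) (dx : ℝ*) :
    naturalExtension (slope f x) (x + dx) = (naturalExtension f (x + dx) - f x) / dx := by
  obtain ⟨d, rfl⟩ := ofSeq_surjective dx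
  refine Germ.coe_eq.mpr (Eventually.of_forall fun n => ?_)
  simp [slope, div_eq_inv_mul]

theorem _root_.HasDerivAt.isSt_differenceQuotient {f : ℝ → ℝ} {f' x : ℝ} (hf : HasDerivAt f f' x)
    {dx : ℝ*} (hdx : Infinitesimal dx) (hdx0 : dx ≠ 0) :
    IsSt ((naturalExtension f (x + dx) - f x) / dx) f' :=
  naturalExtension_slope f x dx ▸
    isSt_naturalExtension_add_of_tendsto (hasDerivAt_iff_tendsto_slope.mp hf) hdx hdx0

theorem IsSt.of_differenceQuotient {U dx : ℝ*} {a p : ℝ} (h : IsSt ((U - a) / dx) p)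
    (hdx : Infinitesimal dx) (hdx0 : dx ≠ 0) : IsSt U a := by
  have hU : U = a + (U - a) / dx * dx := by rw [div_mul_cancel₀ _ hdx0]; ring
  rw [hU]
  simpa using (isSt_refl_real a).add (h.mul hdx)

theorem isSt_differenceQuotient_mul {U V dx : ℝ*} {a b p q : ℝ}
    (hU : IsSt ((U - a) / dx) p) (hV : IsSt ((V - b) / dx) q)
    (hdx : Infinitesimal dx) (hdx0 : dx ≠ 0) :
    IsSt ((U * V - ((a * b : ℝ) : ℝ*)) / dx) (a * q + b * p) := by
  have hsplit : (U * V - ((a * b : ℝ) : ℝ*)) / dx = a * ((V - b) / dx) + V * ((U - a) / dx) := by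
    push_cast; ring
  rw [hsplit]
  exact ((isSt_refl_real a).mul hV).add ((hV.of_differenceQuotient hdx hdx0).mul hU)

end Hyperreal

theorem leibniz_product_rule (u v : ℝ → ℝ) (x u' v' : ℝ)
    (hu : HasDerivAt u u' x) (hv : HasDerivAt v v' x) :
    ∀ dx : ℝ*, Infinitesimal dx → dx ≠ 0 →
      IsSt ((naturalExtension u ((x : ℝ*) + dx) * naturalExtension v ((x : ℝ*) + dx)
          - ((u x * v x : ℝ) : ℝ*)) / dx)
        (u x * v' + v x * u') :=
  fun _ hdx hdx0 => isSt_differenceQuotient_mul (hu.isSt_differenceQuotient hdx hdx0)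
    (hv.isSt_differenceQuotient hdx hdx0) hdx hdx0
end

section
/- Let f : ℝ → ℝ be continuous on [0,1] and let g : ℝ → ℝ be continuous on [0,1], antitone on [0,1], and equimeasurable with f on [0,1]. Then g obeys every modulus of uniformity that f obeys: for all real δ > 0 and ε ≥ 0, if |f p − f q| ≤ ε for all p, q ∈ [0,1] with |p − q| ≤ δ, then |g p − g q| ≤ ε for all p, q ∈ [0,1] with |p − q| ≤ δ. -/
/-!
Suppose `p < q ≤ p + δ` but `g p - g q > ε`, and pick levels `g q < y₁ < y₂ < g p` with
`y₂ - y₁ > ε`. As `g` is antitone and continuous, `{g > y₂}` has measure `> p` and `{g > y₁}`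
has measure `< q`; by equimeasurability so do the corresponding superlevel sets of `f`. In
particular `f` takes a value `≥ y₂` and a value `≤ y₁`, so by continuity there is an interval
`(s, t)` with `f s, f t` on the two levels and `y₁ < f < y₂` inside. That interval lies in
`{f > y₁} \ {f > y₂}`, whence `t - s < q - p ≤ δ`, while `|f s - f t| ≥ y₂ - y₁ > ε`.
-/

open MeasureTheory Set Filter Topology

theorem ContinuousOn.exists_Ioo_strictly_between_levels {α β : Type*}
    [ConditionallyCompleteLinearOrder α] [TopologicalSpace α] [OrderTopology α]
    [LinearOrder β] [TopologicalSpace β] [OrderClosedTopology β]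
    {f : α → β} {u v : α} {y₁ y₂ : β} (huv : u ≤ v) (hf : ContinuousOn f (Icc u v))
    (hu : y₂ ≤ f u) (hv : f v ≤ y₁) :
    ∃ s t, u ≤ s ∧ s ≤ t ∧ t ≤ v ∧ y₂ ≤ f s ∧ f t ≤ y₁ ∧
      ∀ x ∈ Ioo s t, y₁ < f x ∧ f x < y₂ := by
  set K := Icc u v ∩ f ⁻¹' Ici y₂
  have hK : IsCompact K := isCompact_Icc.of_isClosed_subset
    (hf.preimage_isClosed_of_isClosed isClosed_Icc isClosed_Ici) inter_subset_left
  obtain ⟨⟨hus, hsv⟩, hs⟩ : sSup K ∈ K := hK.sSup_mem ⟨u, ⟨le_rfl, huv⟩, hu⟩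
  set K' := Icc (sSup K) v ∩ f ⁻¹' Iic y₁
  have hK' : IsCompact K' := isCompact_Icc.of_isClosed_subset
    ((hf.mono (Icc_subset_Icc_left hus)).preimage_isClosed_of_isClosed isClosed_Icc
      isClosed_Iic) inter_subset_left
  obtain ⟨⟨hst, htv⟩, ht⟩ : sInf K' ∈ K' := hK'.sInf_mem ⟨v, ⟨hsv, le_rfl⟩, hv⟩
  refine ⟨sSup K, sInf K', hus, hst, htv, hs, ht, fun x ⟨hsx, hxt⟩ => ⟨?_, ?_⟩⟩
  · by_contra! hx
    exact (csInf_le hK'.bddBelow ⟨⟨hsx.le, hxt.le.trans htv⟩, hx⟩).not_gt hxt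
  · by_contra! hx
    exact (le_csSup hK.bddAbove ⟨⟨hus.trans hsx.le, hxt.le.trans htv⟩, hx⟩).not_gt hsx

theorem ContinuousOn.exists_Ioo_strictly_between_levels_of_mem_Icc {α : Type*}
    [ConditionallyCompleteLinearOrder α] [TopologicalSpace α] [OrderTopology α]
    {f : α → ℝ} {a b u v : α} {y₁ y₂ : ℝ} (hf : ContinuousOn f (Icc a b))
    (hu : u ∈ Icc a b) (hv : v ∈ Icc a b) (hfu : y₂ ≤ f u) (hfv : f v ≤ y₁) :
    ∃ s ∈ Icc a b, ∃ t ∈ Icc a b, s ≤ t ∧ y₂ - y₁ ≤ |f s - f t| ∧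
      ∀ x ∈ Ioo s t, y₁ < f x ∧ f x < y₂ := by
  rcases le_total u v with huv | hvu
  · obtain ⟨s, t, hus, hst, htv, hfs, hft, hgap⟩ :=
      (hf.mono (Icc_subset_Icc hu.1 hv.2)).exists_Ioo_strictly_between_levels huv hfu hfv
    refine ⟨s, ⟨hu.1.trans hus, hst.trans (htv.trans hv.2)⟩,
      t, ⟨(hu.1.trans hus).trans hst, htv.trans hv.2⟩, hst, ?_, hgap⟩
    exact (sub_le_sub hfs hft).trans (le_abs_self _)
  · obtain ⟨s, t, hvs, hst, htu, hfs, hft, hgap⟩ :=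
      (hf.mono (Icc_subset_Icc hv.1 hu.2)).neg.exists_Ioo_strictly_between_levels
        (y₁ := -y₂) (y₂ := -y₁) hvu (neg_le_neg hfv) (neg_le_neg hfu)
    simp only [Pi.neg_apply, neg_le_neg_iff, neg_lt_neg_iff] at hfs hft hgap
    refine ⟨s, ⟨hv.1.trans hvs, hst.trans (htu.trans hu.2)⟩,
      t, ⟨(hv.1.trans hvs).trans hst, htu.trans hu.2⟩, hst, ?_, fun x hx => (hgap x hx).symm⟩
    rw [abs_sub_comm]
    exact (sub_le_sub hft hfs).trans (le_abs_self _)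

theorem AntitoneOn.ofReal_sub_lt_volume_superlevel {g : ℝ → ℝ} {a b p y : ℝ}
    (hg : AntitoneOn g (Icc a b)) (hgp : ContinuousWithinAt g (Icc a b) p) (hp : p ∈ Ico a b)
    (hy : y < g p) : ENNReal.ofReal (p - a) < volume {x ∈ Icc a b | y < g x} := by
  have hev : ∀ᶠ x in 𝓝[≥] p, x ∈ Icc a b ∧ y < g x :=
    (eventually_mem_nhdsWithin.and (hgp.eventually_const_lt hy)).filter_mono
      (nhdsWithin_le_of_mem (Icc_mem_nhdsGE_of_mem hp))
  obtain ⟨m, hpm, hm⟩ := mem_nhdsGE_iff_exists_Ico_subset.1 hev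
  have hsub : Ico a m ⊆ {x ∈ Icc a b | y < g x} := by
    intro x ⟨hax, hxm⟩
    rcases le_or_gt x p with hxp | hpx
    · have hx : x ∈ Icc a b := ⟨hax, hxp.trans hp.2.le⟩
      exact ⟨hx, hy.trans_le (hg hx ⟨hp.1, hp.2.le⟩ hxp)⟩
    · exact hm ⟨hpx.le, hxm⟩
  calc ENNReal.ofReal (p - a) < ENNReal.ofReal (m - a) := by
        rw [ENNReal.ofReal_lt_ofReal_iff']
        constructor <;> linarith [hp.1, mem_Ioi.1 hpm]
    _ = volume (Ico a m) := Real.volume_Ico.symm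
    _ ≤ _ := measure_mono hsub

theorem AntitoneOn.volume_superlevel_lt_ofReal_sub {g : ℝ → ℝ} {a b q y : ℝ}
    (hg : AntitoneOn g (Icc a b)) (hgq : ContinuousWithinAt g (Icc a b) q) (hq : q ∈ Ioc a b)
    (hy : g q < y) : volume {x ∈ Icc a b | y < g x} < ENNReal.ofReal (q - a) := by
  have hev : ∀ᶠ x in 𝓝[≤] q, g x < y :=
    (hgq.eventually_lt_const hy).filter_mono (nhdsWithin_le_of_mem (Icc_mem_nhdsLE_of_mem hq))
  obtain ⟨c, hcq, hc⟩ := mem_nhdsLE_iff_exists_Ioc_subset.1 hev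
  have hsub : {x ∈ Icc a b | y < g x} ⊆ Icc a c := by
    rintro x ⟨hx, hyx⟩
    refine ⟨hx.1, not_lt.1 fun hcx => ?_⟩
    rcases le_or_gt x q with hxq | hqx
    · exact (hc ⟨hcx, hxq⟩ : g x < y).not_gt hyx
    · exact (hg ⟨hq.1.le, hq.2⟩ hx hqx.le).not_gt (hy.trans hyx)
  calc volume {x ∈ Icc a b | y < g x} ≤ volume (Icc a c) := measure_mono hsub
    _ = ENNReal.ofReal (c - a) := Real.volume_Icc
    _ < ENNReal.ofReal (q - a) := by
        rw [ENNReal.ofReal_lt_ofReal_iff']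
        constructor <;> linarith [hq.1, mem_Iio.1 hcq]

theorem AntitoneOn.sub_le_of_equimeasurable {f g : ℝ → ℝ} {a b δ ε p q : ℝ}
    (hga : AntitoneOn g (Icc a b)) (hf : ContinuousOn f (Icc a b))
    (hgc : ContinuousOn g (Icc a b))
    (heq : ∀ y, volume {x ∈ Icc a b | y < f x} = volume {x ∈ Icc a b | y < g x})
    (H : ∀ p ∈ Icc a b, ∀ q ∈ Icc a b, |p - q| ≤ δ → |f p - f q| ≤ ε) (hε : 0 ≤ ε)
    (hp : p ∈ Icc a b) (hq : q ∈ Icc a b) (hpq : p < q) (hδ : q - p ≤ δ) :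
    g p - g q ≤ ε := by
  by_contra! hgpq
  obtain ⟨y₁, y₂, hy₁, hy₁₂, hy₂⟩ : ∃ y₁ y₂, g q < y₁ ∧ ε < y₂ - y₁ ∧ y₂ < g p :=
    ⟨g q + (g p - g q - ε) / 3, g p - (g p - g q - ε) / 3, by linarith, by linarith,
      by linarith⟩
  have h₂ : ENNReal.ofReal (p - a) < volume {x ∈ Icc a b | y₂ < f x} :=
    (heq y₂).symm ▸ hga.ofReal_sub_lt_volume_superlevel (hgc p hp) ⟨hp.1, hpq.trans_le hq.2⟩ hy₂
  have h₁ : volume {x ∈ Icc a b | y₁ < f x} < ENNReal.ofReal (q - a) :=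
    (heq y₁) ▸ hga.volume_superlevel_lt_ofReal_sub (hgc q hq) ⟨hp.1.trans_lt hpq, hq.2⟩ hy₁
  obtain ⟨u, hu, hfu⟩ := nonempty_of_measure_ne_zero (pos_of_gt h₂).ne'
  obtain ⟨v, hv, hfv⟩ : ∃ v ∈ Icc a b, f v ≤ y₁ := by
    by_contra! hall
    have hsub : Icc a b ⊆ {x ∈ Icc a b | y₁ < f x} := fun x hx => ⟨hx, hall x hx⟩
    have := (measure_mono (μ := volume) hsub).trans_lt h₁
    rw [Real.volume_Icc, ENNReal.ofReal_lt_ofReal_iff'] at this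
    linarith [this.1, hq.2]
  obtain ⟨s, hs, t, ht, hst, hfst, hgap⟩ :=
    hf.exists_Ioo_strictly_between_levels_of_mem_Icc hu hv hfu.le hfv
  have hvol : ENNReal.ofReal (t - s) + volume {x ∈ Icc a b | y₂ < f x}
      ≤ volume {x ∈ Icc a b | y₁ < f x} := by
    rw [← Real.volume_Ioo, ← measure_union' _ measurableSet_Ioo]
    · refine measure_mono (union_subset (fun x hx => ⟨?_, (hgap x hx).1⟩) fun x hx => ⟨hx.1, ?_⟩)
      · exact ⟨hs.1.trans hx.1.le, hx.2.le.trans ht.2⟩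
      · linarith [hx.2]
    · exact disjoint_left.2 fun x hx hx' => (hgap x hx).2.not_gt hx'.2
  have hts : t - s < q - p := by
    have := ((add_le_add_right h₂.le _).trans hvol).trans_lt h₁
    rw [← ENNReal.ofReal_add (by linarith) (by linarith [hp.1]),
      ENNReal.ofReal_lt_ofReal_iff'] at this
    linarith [this.1]
  have := H s hs t ht (by rw [abs_sub_comm, abs_of_nonneg (by linarith)]; linarith)
  linarith

theorem rearrangement_modulus_of_uniformity_continuous (f g : ℝ → ℝ)
    (hf : ContinuousOn f (Set.Icc 0 1)) (hgc : ContinuousOn g (Set.Icc 0 1))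
    (hga : AntitoneOn g (Set.Icc 0 1))
    (heq : ∀ y : ℝ, volume {x ∈ Set.Icc (0:ℝ) 1 | f x > y}
      = volume {x ∈ Set.Icc (0:ℝ) 1 | g x > y}) :
    ∀ δ : ℝ, 0 < δ → ∀ ε : ℝ, 0 ≤ ε →
      (∀ p ∈ Set.Icc (0:ℝ) 1, ∀ q ∈ Set.Icc (0:ℝ) 1, |p - q| ≤ δ → |f p - f q| ≤ ε) →
      ∀ p ∈ Set.Icc (0:ℝ) 1, ∀ q ∈ Set.Icc (0:ℝ) 1, |p - q| ≤ δ → |g p - g q| ≤ ε := by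
  intro δ _ ε hε H p hp q hq hpq
  rcases lt_trichotomy p q with h | rfl | h
  · rw [abs_of_nonneg (sub_nonneg.2 (hga hp hq h.le))]
    rw [abs_sub_comm, abs_of_pos (sub_pos.2 h)] at hpq
    exact hga.sub_le_of_equimeasurable hf hgc heq H hε hp hq h hpq
  · simpa using hε
  · rw [abs_sub_comm, abs_of_nonneg (sub_nonneg.2 (hga hq hp h.le))]
    rw [abs_of_pos (sub_pos.2 h)] at hpq
    exact hga.sub_le_of_equimeasurable hf hgc heq H hε hq hp h hpq
end
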